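/- arXiv:2211.10674 — 2 statements merged into one kernel-verified Lean document; each statement's English description precedes it below -/
import Mathlib

section
/- Let τ > 0 and let ω : ℝ → ℝ be a continuous scalar regressor that is persistently exciting with window T > 0 and level ρ > 0, i.e., ∫_t^{t+T} ω(s)² ds ≥ ρ for all t ≥ 0. Then every solution of the scalar parametric error equation ϑ̃'(t) = −τ ω(t)² ϑ̃(t) converges exponentially to zero: for all t ≥ t₀ ≥ 0, |ϑ̃(t)| ≤ e^{τρ} · e^{−(τρ/T)(t−t₀)} · |ϑ̃(t₀)|. -/
/-- If the scalar regressor `ω` is persistently exciting with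
window `T` and level `ρ`, every solution of `ϑ̃' = -τ ω² ϑ̃` converges
exponentially: `|ϑ̃(t)| ≤ e^{τρ} e^{-(τρ/T)(t - t₀)} |ϑ̃(t₀)|`. -/
theorem scalar_PEE_exponential_convergence
    (τ T ρ : ℝ) (hτ : 0 < τ) (hT : 0 < T) (hρ : 0 < ρ)
    (ω : ℝ → ℝ) (hω : Continuous ω)
    (hPE : ∀ t ≥ (0:ℝ), ρ ≤ ∫ s in t..(t + T), (ω s) ^ 2)
    (θ : ℝ → ℝ)
    (hθ : ∀ t, HasDerivAt θ (-(τ * (ω t) ^ 2 * θ t)) t)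
    (t₀ t : ℝ) (h₀ : 0 ≤ t₀) (ht : t₀ ≤ t) :
    |θ t| ≤ Real.exp (τ * ρ) * Real.exp (-(τ * ρ / T) * (t - t₀)) * |θ t₀| := by
  have hfc : Continuous (fun s => ω s ^ 2) := hω.pow 2
  have hfnn : ∀ s, 0 ≤ ω s ^ 2 := fun s => sq_nonneg _
  -- lower bound on integral over n windows
  have hwin : ∀ n : ℕ, (n : ℝ) * ρ ≤ ∫ s in t₀..(t₀ + n * T), ω s ^ 2 := by
    intro n
    induction n with
    | zero => simp
    | succ n ih =>
      have hend : t₀ + ((n : ℝ) + 1) * T = (t₀ + n * T) + T := by ring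
      have hadd := intervalIntegral.integral_add_adjacent_intervals
        (hfc.intervalIntegrable t₀ (t₀ + n * T))
        (hfc.intervalIntegrable (t₀ + n * T) (t₀ + n * T + T))
        (μ := MeasureTheory.volume)
      have hpe := hPE (t₀ + n * T)
        (by positivity)
      push_cast
      rw [hend, ← hadd]
      linarith
  set n : ℕ := ⌊(t - t₀) / T⌋₊ with hn
  have hn1 : (n : ℝ) ≤ (t - t₀) / T := Nat.floor_le (div_nonneg (by linarith) hT.le)
  have hn2 : (t - t₀) / T < (n : ℝ) + 1 := Nat.lt_floor_add_one _
  have hmid : t₀ + n * T ≤ t := by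
    have := (le_div_iff₀ hT).mp hn1
    linarith
  have hIbound : ρ * ((t - t₀) / T) - ρ ≤ ∫ s in t₀..t, ω s ^ 2 := by
    have hsplit := intervalIntegral.integral_add_adjacent_intervals
      (hfc.intervalIntegrable t₀ (t₀ + n * T))
      (hfc.intervalIntegrable (t₀ + n * T) t)
      (μ := MeasureTheory.volume)
    have htail : 0 ≤ ∫ s in (t₀ + n * T)..t, ω s ^ 2 :=
      intervalIntegral.integral_nonneg hmid (fun s _ => hfnn s)
    have h1 := hwin n
    nlinarith
  -- the solution formula
  set I : ℝ → ℝ := fun x => ∫ s in t₀..x, ω s ^ 2 with hI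
  have hIder : ∀ u : ℝ, HasDerivAt I (ω u ^ 2) u := by
    intro u
    exact intervalIntegral.integral_hasDerivAt_right
      (hfc.intervalIntegrable t₀ u)
      (hfc.stronglyMeasurableAtFilter _ _)
      hfc.continuousAt
  set g : ℝ → ℝ := fun x => θ x * Real.exp (τ * I x) with hg
  have hgder : ∀ u : ℝ, HasDerivAt g 0 u := by
    intro u
    have h1 : HasDerivAt (fun x => Real.exp (τ * I x))
        (Real.exp (τ * I u) * (τ * ω u ^ 2)) u := ((hIder u).const_mul τ).exp
    have h2 : HasDerivAt (fun x => θ x * Real.exp (τ * I x)) _ u := (hθ u).mul h1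
    convert h2 using 1
    ring
  have hconst : g t = g t₀ :=
    is_const_of_deriv_eq_zero (fun u => (hgder u).differentiableAt)
      (fun u => (hgder u).deriv) t t₀
  have hIt₀ : I t₀ = 0 := intervalIntegral.integral_same
  have hθt : θ t = θ t₀ * Real.exp (-(τ * I t)) := by
    have : θ t * Real.exp (τ * I t) = θ t₀ := by
      have := hconst
      simp only [hg, hIt₀, mul_zero, Real.exp_zero, mul_one] at this
      exact this
    have hpos := Real.exp_pos (τ * I t)
    rw [Real.exp_neg, ← this]
    field_simp
  rw [hθt, abs_mul, abs_of_pos (Real.exp_pos _)]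
  rw [← Real.exp_add, mul_comm (|θ t₀|)]
  gcongr ?_ * |θ t₀|
  apply Real.exp_le_exp.mpr
  have hdiv : τ * ρ * ((t - t₀) / T) = τ * ρ / T * (t - t₀) := by ring
  nlinarith [hIbound, mul_le_mul_of_nonneg_left hIbound hτ.le]
end

section
/- Let τ > 0, μ ∈ ℝ, and let ω₁, ω₂ : ℝ → ℝ be continuous. If a differentiable curve (ϑ̃₁, ϑ̃₂) satisfies the modified q = 2 error dynamics ϑ̃₁'(t) = −τω₁(t)(ω₁(t)ϑ̃₁(t) + ω₂(t)ϑ̃₂(t)), ϑ̃₂'(t) = −τω₂(t)(ω₁(t)ϑ̃₁(t) + ω₂(t)ϑ̃₂(t)) + (τω₂(t) − μτω₁(t))(ω₁(t)ϑ̃₁(t) + ω₂(t)ϑ̃₂(t)) and lies on the manifold, i.e., ϑ̃₂(t) = μϑ̃₁(t) for all t, then η(t) := ϑ̃₁(t) satisfies the scalar target dynamics η'(t) = −τ ω₁(t)² η(t) − τμ ω₁(t)ω₂(t) η(t), and hence η(t) = η(t₀) · exp(−τ ∫_{t₀}^{t} ω₁(s)(ω₁(s) + μ ω₂(s)) ds).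 -/
/-- A solution of the modified `q = 2` error dynamics lying on
the manifold `ϑ̃₂ = μϑ̃₁` has `η = ϑ̃₁` satisfying the scalar target dynamics
`η' = -τω₁²η - τμω₁ω₂η`, hence
`η(t) = η(t₀) exp(-τ ∫_{t₀}^t ω₁(ω₁ + μω₂))`. -/
theorem MGE_q2_target_dynamics
    (τ μ : ℝ) (hτ : 0 < τ)
    (ω₁ ω₂ : ℝ → ℝ) (hω₁ : Continuous ω₁) (hω₂ : Continuous ω₂)
    (θ₁ θ₂ : ℝ → ℝ)
    (hθ₁ : ∀ t, HasDerivAt θ₁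
        (-(τ * ω₁ t * (ω₁ t * θ₁ t + ω₂ t * θ₂ t))) t)
    (hθ₂ : ∀ t, HasDerivAt θ₂
        (-(τ * ω₂ t * (ω₁ t * θ₁ t + ω₂ t * θ₂ t))
          + (τ * ω₂ t - μ * τ * ω₁ t) * (ω₁ t * θ₁ t + ω₂ t * θ₂ t)) t)
    (hman : ∀ t, θ₂ t = μ * θ₁ t) :
    (∀ t, HasDerivAt θ₁
        (-(τ * (ω₁ t) ^ 2 * θ₁ t) - τ * μ * ω₁ t * ω₂ t * θ₁ t) t) ∧
    (∀ t₀ t, θ₁ t = θ₁ t₀ *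
        Real.exp (-(τ * ∫ s in t₀..t, ω₁ s * (ω₁ s + μ * ω₂ s)))) := by
  set f : ℝ → ℝ := fun s => ω₁ s * (ω₁ s + μ * ω₂ s) with hfdef
  have hfc : Continuous f := by fun_prop
  have key : ∀ t, HasDerivAt θ₁
      (-(τ * (ω₁ t) ^ 2 * θ₁ t) - τ * μ * ω₁ t * ω₂ t * θ₁ t) t := by
    intro t
    have h := hθ₁ t
    rw [hman t] at h
    convert h using 1
    ring
  refine ⟨key, ?_⟩
  intro t₀ t
  have hInt : ∀ x : ℝ, HasDerivAt (fun u => ∫ s in t₀..u, f s) (f x) x := by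
    intro x
    exact intervalIntegral.integral_hasDerivAt_right
      (hfc.intervalIntegrable t₀ x)
      (hfc.stronglyMeasurableAtFilter _ _)
      hfc.continuousAt
  set g : ℝ → ℝ := fun u => θ₁ u * Real.exp (τ * ∫ s in t₀..u, f s) with hgdef
  have hg : ∀ x, HasDerivAt g 0 x := by
    intro x
    have hE : HasDerivAt (fun u => Real.exp (τ * ∫ s in t₀..u, f s))
        (Real.exp (τ * ∫ s in t₀..x, f s) * (τ * f x)) x := by
      have := ((hInt x).const_mul τ).exp
      simpa [mul_comm] using this
    have : HasDerivAt (fun u => θ₁ u * Real.exp (τ * ∫ s in t₀..u, f s)) _ x := (key x).mul hE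
    convert this using 1
    simp only [hfdef]
    ring
  have hconst : g t = g t₀ := by
    have : ∀ x y : ℝ, g x = g y := fun x y =>
      is_const_of_deriv_eq_zero (fun u => (hg u).differentiableAt)
        (fun u => (hg u).deriv) x y
    exact this t t₀
  have h0 : g t₀ = θ₁ t₀ := by simp [hgdef]
  have hgt : θ₁ t * Real.exp (τ * ∫ s in t₀..t, f s) = θ₁ t₀ := by
    rw [← h0, ← hconst]
  have hepos : Real.exp (τ * ∫ s in t₀..t, f s) ≠ 0 := Real.exp_ne_zero _
  field_simp [Real.exp_neg]
  rw [Real.exp_neg, ← hgt]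
  field_simp
end
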